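/- arXiv:2110.04844 — 2 statements merged into one kernel-verified Lean document; each statement's English description precedes it below -/
import Mathlib

section
/- Let ν ≥ 2, and let U, V be finite sets with |U|, |V| ≥ 2. Define p_{i_n} = M_U·n^{-ν} for n ∈ [|U|] and p_{j_m} = M_V·m^{-ν} for m ∈ [|V|] with normalizations M_U = 1/∑_{n=1}^{|U|} n^{-ν} and M_V = 1/∑_{m=1}^{|V|} m^{-ν}. Then for every n ∈ [|U|], 2·p_{i_n}/(∑_{n'=1}^{|U|} p_{i_{n'}}² + ∑_{m'=1}^{|V|} p_{j_{m'}}²) ≤ 16·n^{-ν}. -/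
open Real Finset

lemma sum_inv_sq_le : ∀ M : ℕ, 1 ≤ M →
    ∑ n ∈ Finset.Icc 1 M, ((n : ℝ) ^ 2)⁻¹ ≤ 2 - 1 / M := by
  intro M hM
  induction M, hM using Nat.le_induction with
  | base => norm_num
  | succ m hm ih =>
    rw [Finset.sum_Icc_succ_top (by omega : 1 ≤ m + 1)]
    have hmr : (1 : ℝ) ≤ (m : ℝ) := by exact_mod_cast hm
    have key : (((m : ℝ) + 1) ^ 2)⁻¹ ≤ 1 / (m : ℝ) - 1 / ((m : ℝ) + 1) := by
      have h0 : (0:ℝ) < (m : ℝ) := by linarith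
      rw [inv_eq_one_div, div_sub_div _ _ (by positivity) (by positivity),
        div_le_div_iff₀ (by positivity) (by positivity)]
      nlinarith
    push_cast
    linarith

lemma sum_pow_le_two (ν : ℝ) (hν : 2 ≤ ν) (M : ℕ) (hM : 1 ≤ M) :
    ∑ n ∈ Finset.Icc 1 M, (n : ℝ) ^ (-ν) ≤ 2 := by
  have h1 : ∑ n ∈ Finset.Icc 1 M, (n : ℝ) ^ (-ν) ≤
      ∑ n ∈ Finset.Icc 1 M, ((n : ℝ) ^ 2)⁻¹ := by
    apply Finset.sum_le_sum
    intro i hi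
    have hi1 : 1 ≤ i := (Finset.mem_Icc.mp hi).1
    have hir : (1 : ℝ) ≤ (i : ℝ) := by exact_mod_cast hi1
    calc (i : ℝ) ^ (-ν) ≤ (i : ℝ) ^ (-(2:ℝ)) :=
          Real.rpow_le_rpow_of_exponent_le hir (by linarith)
      _ = ((i : ℝ) ^ 2)⁻¹ := by
          rw [Real.rpow_neg (by linarith), Real.rpow_two]
  have h2 := sum_inv_sq_le M hM
  have h3 : (0:ℝ) < (M:ℝ) := by exact_mod_cast (by omega : 0 < M)
  have h4 : (0:ℝ) ≤ 1 / (M:ℝ) := by positivity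
  linarith

/-- Polynomial-tail improvement ratio: with normalized power-law user/item
frequencies (exponent `ν ≥ 2`, `|U|, |V| ≥ 2`), the FA-SGD improvement factor
`2 p_{i_n} / ∑_{l∈X} p_l²` is at most `16 n^{-ν}`. -/
theorem stmt_8 (ν : ℝ) (hν : 2 ≤ ν) (M₁ M₂ : ℕ) (hM₁ : 2 ≤ M₁) (hM₂ : 2 ≤ M₂)
    (MU MV : ℝ)
    (hMU : MU = 1 / ∑ n ∈ Finset.Icc 1 M₁, (n : ℝ) ^ (-ν))
    (hMV : MV = 1 / ∑ m ∈ Finset.Icc 1 M₂, (m : ℝ) ^ (-ν)) :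
    ∀ n ∈ Finset.Icc 1 M₁,
      2 * (MU * (n : ℝ) ^ (-ν)) /
          ((∑ l ∈ Finset.Icc 1 M₁, (MU * (l : ℝ) ^ (-ν)) ^ 2) +
            ∑ l ∈ Finset.Icc 1 M₂, (MV * (l : ℝ) ^ (-ν)) ^ 2) ≤
        16 * (n : ℝ) ^ (-ν) := by
  intro n hn
  obtain ⟨hn1, hnM⟩ := Finset.mem_Icc.mp hn
  have hnpos : (0:ℝ) < (n:ℝ) := by exact_mod_cast (by omega : 0 < n)
  have hx : (0:ℝ) < (n:ℝ) ^ (-ν) := Real.rpow_pos_of_pos hnpos _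
  set S₁ := ∑ n ∈ Finset.Icc 1 M₁, (n : ℝ) ^ (-ν) with hS₁
  have hS₁pos : 0 < S₁ := by
    apply Finset.sum_pos ?_ ⟨1, Finset.mem_Icc.mpr ⟨le_refl 1, by omega⟩⟩
    intro i hi
    have hi1 : 1 ≤ i := (Finset.mem_Icc.mp hi).1
    have : (0:ℝ) < (i:ℝ) := by exact_mod_cast (by omega : 0 < i)
    positivity
  have hS₁le2 : S₁ ≤ 2 := sum_pow_le_two ν hν M₁ (by omega)
  have hMUpos : 0 < MU := by rw [hMU]; positivity
  have hMUge : (1:ℝ)/2 ≤ MU := by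
    rw [hMU]
    exact one_div_le_one_div_of_le hS₁pos hS₁le2
  -- first sum ≥ MU²
  have hT : (1:ℝ) ≤ ∑ l ∈ Finset.Icc 1 M₁, ((l : ℝ) ^ (-ν)) ^ 2 := by
    have h1 : (1 : ℕ) ∈ Finset.Icc 1 M₁ := Finset.mem_Icc.mpr ⟨le_refl 1, by omega⟩
    have := Finset.single_le_sum (f := fun l : ℕ => ((l : ℝ) ^ (-ν)) ^ 2)
      (fun i _ => by positivity) h1
    simpa using this
  have hsum1 : MU ^ 2 ≤ ∑ l ∈ Finset.Icc 1 M₁, (MU * (l : ℝ) ^ (-ν)) ^ 2 := by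
    have heq : ∑ l ∈ Finset.Icc 1 M₁, (MU * (l : ℝ) ^ (-ν)) ^ 2
        = MU ^ 2 * ∑ l ∈ Finset.Icc 1 M₁, ((l : ℝ) ^ (-ν)) ^ 2 := by
      rw [Finset.mul_sum]; exact Finset.sum_congr rfl (fun l _ => by ring)
    rw [heq]
    nlinarith [sq_nonneg MU]
  have hsum2 : (0:ℝ) ≤ ∑ l ∈ Finset.Icc 1 M₂, (MV * (l : ℝ) ^ (-ν)) ^ 2 :=
    Finset.sum_nonneg (fun l _ => sq_nonneg _)
  set D := (∑ l ∈ Finset.Icc 1 M₁, (MU * (l : ℝ) ^ (-ν)) ^ 2) +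
      ∑ l ∈ Finset.Icc 1 M₂, (MV * (l : ℝ) ^ (-ν)) ^ 2 with hD
  have hDge : MU ^ 2 ≤ D := by rw [hD]; linarith
  have hDpos : 0 < D := lt_of_lt_of_le (by positivity) hDge
  rw [div_le_iff₀ hDpos]
  nlinarith [mul_le_mul_of_nonneg_left hDge (le_of_lt hx),
    mul_pos hMUpos hx, sq_nonneg MU]
end

section
/- Let f: ℝ^{N×d} → ℝ be defined by f(Θ) = ∑_{(i,j)} D(i,j)·ℓ(θ_i, θ_j; y_{ij}) where D is a probability distribution over user-item pairs, ℓ(u,v;y) is twice differentiable and symmetric in (u,v), with ‖∇²_{uu}ℓ‖₂ ≤ L and ‖∇²_{uv}ℓ‖₂ ≤ L. Let p_i = ∑_j D(i,j) and p_j = ∑_i D(i,j). Fix a user i and item j and perturbations δ_i, δ_j ∈ ℝ^d, and let Θ' agree with Θ except θ'_i = θ_i + δ_i, θ'_j = θ_j + δ_j. Then f(Θ') ≤ f(Θ) + ⟨∇_{θ_i}f, δ_i⟩ + ⟨∇_{θ_j}f, δ_j⟩ + L·p_i·‖δ_i‖² + L·p_j·‖δ_j‖². -/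
/-!
Along the segment `t ↦ z + t • h` a second-order Taylor bound gives
`g (z + h) ≤ g z + g' z h + C / 2` whenever `g'' h h ≤ C`. For a symmetric loss the four blocks
of the Hessian at `(a, b)` are controlled by the `uu` and `uv` bounds (the `vv` and `vu` blocks
are those of the swapped point), so `g'' (a, b) (a, b) ≤ L (‖a‖ + ‖b‖)² ≤ 2L (‖a‖² + ‖b‖²)`.
Summing this per-pair bound with weights `D i' j'`, only pairs in row `i` see `δᵢ` and only pairs
in column `j` see `δⱼ`, which produces the frequencies `pᵢ` and `pⱼ`.
-/

open Finset

theorem le_add_add_half_of_hasDerivAt {φ φ' φ'' : ℝ → ℝ} {C : ℝ}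
    (hφ : ∀ t, HasDerivAt φ (φ' t) t) (hφ' : ∀ t, HasDerivAt φ' (φ'' t) t)
    (hC : ∀ t, φ'' t ≤ C) : φ 1 ≤ φ 0 + φ' 0 + C / 2 := by
  have hslope : Antitone fun t => φ' t - C * t :=
    antitone_of_hasDerivAt_nonpos (fun t => (hφ' t).sub ((hasDerivAt_id t).const_mul C))
      fun t => by simpa using hC t
  have hψ : ∀ t, HasDerivAt (fun t => φ t - t * φ' 0 - C / 2 * t ^ 2)
      (φ' t - φ' 0 - C * t) t := fun t => by
    refine (((hφ t).fun_sub (hasDerivAt_mul_const (φ' 0))).fun_sub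
      ((hasDerivAt_pow 2 t).const_mul (C / 2))).congr_deriv ?_
    push_cast; ring
  have hanti : AntitoneOn (fun t => φ t - t * φ' 0 - C / 2 * t ^ 2) (Set.Ici 0) :=
    antitoneOn_of_hasDerivWithinAt_nonpos (convex_Ici 0)
      (fun t _ => (hψ t).continuousAt.continuousWithinAt)
      (fun t _ => (hψ t).hasDerivWithinAt)
      fun t ht => by
        rw [interior_Ici] at ht
        linarith [hslope (le_of_lt ht)]
  have h01 := hanti Set.self_mem_Ici (show (0 : ℝ) ≤ 1 by norm_num) zero_le_one
  beta_reduce at h01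
  linarith

theorem ContDiff.le_add_fderiv_add_half {E : Type*} [NormedAddCommGroup E] [NormedSpace ℝ E]
    {g : E → ℝ} (hg : ContDiff ℝ 2 g) (z h : E) {C : ℝ}
    (hC : ∀ w, fderiv ℝ (fderiv ℝ g) w h h ≤ C) :
    g (z + h) ≤ g z + fderiv ℝ g z h + C / 2 := by
  have hline : ∀ t : ℝ, HasDerivAt (fun t : ℝ => z + t • h) h t := fun t => by
    simpa using ((hasDerivAt_id t).smul_const h).const_add z
  have hg' : ∀ w, HasFDerivAt g (fderiv ℝ g w) w := fun w =>
    (hg.differentiable (by norm_num) w).hasFDerivAt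
  have hg'' : ∀ w, HasFDerivAt (fderiv ℝ g) (fderiv ℝ (fderiv ℝ g) w) w := fun w =>
    ((hg.fderiv_right (by norm_num)).differentiable one_ne_zero w).hasFDerivAt
  have := le_add_add_half_of_hasDerivAt
    (φ := fun t => g (z + t • h)) (φ' := fun t => fderiv ℝ g (z + t • h) h)
    (fun t => (hg' _).comp_hasDerivAt t (hline t))
    (fun t => ((hg'' _).clm_apply (hasFDerivAt_const h _)).comp_hasDerivAt t (hline t)
      |>.congr_deriv (by simp))
    (fun t => hC (z + t • h))
  simpa using this

section SymmetricLoss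

variable {E : Type*} [NormedAddCommGroup E] [NormedSpace ℝ E]

theorem fderiv_fderiv_apply_eq_swap {g : E × E → ℝ} (hg : ContDiff ℝ 2 g)
    (hsym : ∀ u v, g (u, v) = g (v, u)) (w p q : E × E) :
    fderiv ℝ (fderiv ℝ g) w p q = fderiv ℝ (fderiv ℝ g) w.swap p.swap q.swap := by
  let σ : E × E →L[ℝ] E × E := (ContinuousLinearEquiv.prodComm ℝ E E).toContinuousLinearMap
  have hgσ : g ∘ σ = g := funext fun z => hsym z.2 z.1
  have hcomp := σ.iteratedFDeriv_comp_right hg w (i := 2) le_rfl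
  rw [hgσ] at hcomp
  simpa [iteratedFDeriv_two_apply, σ] using congrArg (fun M => M ![p, q]) hcomp

theorem fderiv_fderiv_apply_self_le {g : E × E → ℝ} (hg : ContDiff ℝ 2 g)
    (hsym : ∀ u v, g (u, v) = g (v, u)) {L : ℝ}
    (huu : ∀ z (a b : E), ‖iteratedFDeriv ℝ 2 g z ![(a, 0), (b, 0)]‖ ≤ L * ‖a‖ * ‖b‖)
    (huv : ∀ z (a b : E), ‖iteratedFDeriv ℝ 2 g z ![(a, 0), (0, b)]‖ ≤ L * ‖a‖ * ‖b‖)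
    (w : E × E) (a b : E) :
    fderiv ℝ (fderiv ℝ g) w (a, b) (a, b) ≤ L * (‖a‖ + ‖b‖) ^ 2 := by
  have huu' : ∀ z (a b : E), fderiv ℝ (fderiv ℝ g) z (a, 0) (b, 0) ≤ L * ‖a‖ * ‖b‖ :=
    fun z a b => (le_abs_self _).trans (by simpa [iteratedFDeriv_two_apply] using huu z a b)
  have huv' : ∀ z (a b : E), fderiv ℝ (fderiv ℝ g) z (a, 0) (0, b) ≤ L * ‖a‖ * ‖b‖ :=
    fun z a b => (le_abs_self _).trans (by simpa [iteratedFDeriv_two_apply] using huv z a b)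
  have hvu : fderiv ℝ (fderiv ℝ g) w (0, b) (a, 0) ≤ L * ‖b‖ * ‖a‖ := by
    rw [fderiv_fderiv_apply_eq_swap hg hsym]; simpa using huv' w.swap b a
  have hvv : fderiv ℝ (fderiv ℝ g) w (0, b) (0, b) ≤ L * ‖b‖ * ‖b‖ := by
    rw [fderiv_fderiv_apply_eq_swap hg hsym]; simpa using huu' w.swap b b
  rw [show ((a, b) : E × E) = (a, 0) + (0, b) by simp]
  simp only [map_add, add_apply]
  linarith [huu' w a a, huv' w a b]

theorem le_add_fderiv_add_sq_of_block_bounds {g : E × E → ℝ} (hg : ContDiff ℝ 2 g)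
    (hsym : ∀ u v, g (u, v) = g (v, u)) {L : ℝ} (hL : 0 ≤ L)
    (huu : ∀ z (a b : E), ‖iteratedFDeriv ℝ 2 g z ![(a, 0), (b, 0)]‖ ≤ L * ‖a‖ * ‖b‖)
    (huv : ∀ z (a b : E), ‖iteratedFDeriv ℝ 2 g z ![(a, 0), (0, b)]‖ ≤ L * ‖a‖ * ‖b‖)
    (u v a b : E) :
    g (u + a, v + b) ≤ g (u, v) + fderiv ℝ g (u, v) (a, 0) + fderiv ℝ g (u, v) (0, b) +
      L * ‖a‖ ^ 2 + L * ‖b‖ ^ 2 := by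
  have htaylor := hg.le_add_fderiv_add_half (u, v) (a, b)
    (fderiv_fderiv_apply_self_le hg hsym huu huv · a b)
  have hsplit : fderiv ℝ g (u, v) (a, b) =
      fderiv ℝ g (u, v) (a, 0) + fderiv ℝ g (u, v) (0, b) := by
    rw [← map_add, Prod.mk_add_mk, add_zero, zero_add]
  rw [Prod.mk_add_mk, hsplit] at htaylor
  nlinarith [mul_nonneg hL (sq_nonneg (‖a‖ - ‖b‖))]

end SymmetricLoss

section PartialDerivatives

variable {𝕜 E F G κ : Type*} [NontriviallyNormedField 𝕜] [NormedAddCommGroup E]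
  [NormedSpace 𝕜 E] [NormedAddCommGroup F] [NormedSpace 𝕜 F] [NormedAddCommGroup G]
  [NormedSpace 𝕜 G] [Fintype κ]

theorem fderiv_sum_apply_update [DecidableEq κ] (H : κ → F → G) (Θ : κ → F) (i : κ) :
    fderiv 𝕜 (fun u => ∑ k, H k (Function.update Θ i u k)) = fderiv 𝕜 (H i) := by
  have hsum : (fun u => ∑ k, H k (Function.update Θ i u k)) =
      fun u => H i u + ∑ k ∈ univ \ {i}, H k (Θ k) := by
    funext u
    simp only [Function.apply_update H, sum_update_of_mem (mem_univ i)]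
  rw [hsum]
  exact funext fun x => fderiv_add_const _

theorem fderiv_sum_mul_comp_prodMk_left_apply (c : κ → 𝕜) (g : κ → E × F → 𝕜) (x : E)
    (y : κ → F) (hg : ∀ k, DifferentiableAt 𝕜 (g k) (x, y k)) (a : E) :
    fderiv 𝕜 (fun x' => ∑ k, c k * g k (x', y k)) x a =
      ∑ k, c k * fderiv 𝕜 (g k) (x, y k) (a, 0) := by
  have := HasFDerivAt.fun_sum (u := univ) (A := fun k x' => c k * g k (x', y k)) fun k _ =>
    ((hg k).hasFDerivAt.comp x (hasFDerivAt_prodMk_left (𝕜 := 𝕜) x (y k))).const_mul (c k)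
  simp [this.fderiv]

theorem fderiv_sum_mul_comp_prodMk_right_apply (c : κ → 𝕜) (g : κ → E × F → 𝕜) (x : κ → E)
    (y : F) (hg : ∀ k, DifferentiableAt 𝕜 (g k) (x k, y)) (b : F) :
    fderiv 𝕜 (fun y' => ∑ k, c k * g k (x k, y')) y b =
      ∑ k, c k * fderiv 𝕜 (g k) (x k, y) (0, b) := by
  have := HasFDerivAt.fun_sum (u := univ) (A := fun k y' => c k * g k (x k, y')) fun k _ =>
    ((hg k).hasFDerivAt.comp y (hasFDerivAt_prodMk_right (𝕜 := 𝕜) (x k) y)).const_mul (c k)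
  simp [this.fderiv]

end PartialDerivatives

theorem Function.update_self_add_eq_add_single {ι M : Type*} [DecidableEq ι] [AddCommMonoid M]
    (Θ : ι → M) (i : ι) (δ : M) :
    Function.update Θ i (Θ i + δ) = Θ + Pi.single i δ := by
  funext k
  rcases eq_or_ne k i with rfl | hk <;> simp [*]

theorem sum_apply_pi_single {ι M N : Type*} [Fintype ι] [DecidableEq ι] [Zero M]
    [AddCommMonoid N] (H : ι → M → N) (h0 : ∀ k, H k 0 = 0) (i : ι) (x : M) :
    ∑ k, H k ((Pi.single i x : ι → M) k) = H i x := by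
  rw [Fintype.sum_eq_single i fun k hk => by rw [Pi.single_eq_of_ne hk, h0], Pi.single_eq_same]

section PairwiseObjective

variable {U V E : Type*} [Fintype U] [Fintype V] [NormedAddCommGroup E] [NormedSpace ℝ E]

/-- `D i j` weighs the pair `(i, j)` and `g i j` is the loss `ℓ(·, ·; y i j)` of that pair. -/
def pairwiseObjective (D : U → V → ℝ) (g : U → V → E × E → ℝ) (Θ : U → E) (Φ : V → E) : ℝ :=
  ∑ i, ∑ j, D i j * g i j (Θ i, Φ j)

variable (D : U → V → ℝ) {g : U → V → E × E → ℝ}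

theorem fderiv_pairwiseObjective_update_left_apply [DecidableEq U]
    (hg : ∀ i j, Differentiable ℝ (g i j)) (Θ : U → E) (Φ : V → E) (i : U) (δ : E) :
    fderiv ℝ (fun u => pairwiseObjective D g (Function.update Θ i u) Φ) (Θ i) δ =
      ∑ j, D i j * fderiv ℝ (g i j) (Θ i, Φ j) (δ, 0) := by
  simp only [pairwiseObjective]
  rw [fderiv_sum_apply_update (fun i' u => ∑ j, D i' j * g i' j (u, Φ j)) Θ i]
  exact fderiv_sum_mul_comp_prodMk_left_apply _ _ _ _ (fun j => hg i j _) δ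

theorem fderiv_pairwiseObjective_update_right_apply [DecidableEq V]
    (hg : ∀ i j, Differentiable ℝ (g i j)) (Θ : U → E) (Φ : V → E) (j : V) (δ : E) :
    fderiv ℝ (fun v => pairwiseObjective D g Θ (Function.update Φ j v)) (Φ j) δ =
      ∑ i, D i j * fderiv ℝ (g i j) (Θ i, Φ j) (0, δ) := by
  simp only [pairwiseObjective]
  rw [funext fun v => sum_comm,
    fderiv_sum_apply_update (fun j' v => ∑ i, D i j' * g i j' (Θ i, v)) Φ j]
  exact fderiv_sum_mul_comp_prodMk_right_apply _ _ _ _ (fun i => hg i j _) δ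

variable {D} {L : ℝ}

theorem pairwiseObjective_add_le (hD : ∀ i j, 0 ≤ D i j) (hg : ∀ i j, ContDiff ℝ 2 (g i j))
    (hsym : ∀ i j u v, g i j (u, v) = g i j (v, u)) (hL : 0 ≤ L)
    (huu : ∀ i j z (a b : E), ‖iteratedFDeriv ℝ 2 (g i j) z ![(a, 0), (b, 0)]‖ ≤ L * ‖a‖ * ‖b‖)
    (huv : ∀ i j z (a b : E), ‖iteratedFDeriv ℝ 2 (g i j) z ![(a, 0), (0, b)]‖ ≤ L * ‖a‖ * ‖b‖)
    (Θ a : U → E) (Φ b : V → E) :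
    pairwiseObjective D g (Θ + a) (Φ + b) ≤
      ∑ i, ∑ j, D i j * (g i j (Θ i, Φ j) + fderiv ℝ (g i j) (Θ i, Φ j) (a i, 0) +
        fderiv ℝ (g i j) (Θ i, Φ j) (0, b j) + L * ‖a i‖ ^ 2 + L * ‖b j‖ ^ 2) :=
  sum_le_sum fun i _ => sum_le_sum fun j _ => mul_le_mul_of_nonneg_left
    (le_add_fderiv_add_sq_of_block_bounds (hg i j) (hsym i j) hL (huu i j) (huv i j) _ _ _ _)
    (hD i j)

theorem pairwiseObjective_add_single_le [DecidableEq U] [DecidableEq V]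
    (hD : ∀ i j, 0 ≤ D i j) (hg : ∀ i j, ContDiff ℝ 2 (g i j))
    (hsym : ∀ i j u v, g i j (u, v) = g i j (v, u)) (hL : 0 ≤ L)
    (huu : ∀ i j z (a b : E), ‖iteratedFDeriv ℝ 2 (g i j) z ![(a, 0), (b, 0)]‖ ≤ L * ‖a‖ * ‖b‖)
    (huv : ∀ i j z (a b : E), ‖iteratedFDeriv ℝ 2 (g i j) z ![(a, 0), (0, b)]‖ ≤ L * ‖a‖ * ‖b‖)
    (Θ : U → E) (Φ : V → E) (i : U) (j : V) (δi δj : E) :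
    pairwiseObjective D g (Θ + Pi.single i δi) (Φ + Pi.single j δj) ≤
      pairwiseObjective D g Θ Φ + ∑ j', D i j' * fderiv ℝ (g i j') (Θ i, Φ j') (δi, 0) +
        ∑ i', D i' j * fderiv ℝ (g i' j) (Θ i', Φ j) (0, δj) +
        L * (∑ j', D i j') * ‖δi‖ ^ 2 + L * (∑ i', D i' j) * ‖δj‖ ^ 2 := by
  refine (pairwiseObjective_add_le hD hg hsym hL huu huv Θ _ Φ _).trans_eq ?_
  have hlin_i : ∑ i', ∑ j', D i' j' *
      fderiv ℝ (g i' j') (Θ i', Φ j') ((Pi.single i δi : U → E) i', 0) =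
        ∑ j', D i j' * fderiv ℝ (g i j') (Θ i, Φ j') (δi, 0) :=
    sum_apply_pi_single (fun i' u => ∑ j', D i' j' * fderiv ℝ (g i' j') (Θ i', Φ j') (u, 0))
      (by simp [Prod.mk_zero_zero]) i δi
  have hlin_j : ∑ i', ∑ j', D i' j' *
      fderiv ℝ (g i' j') (Θ i', Φ j') (0, (Pi.single j δj : V → E) j') =
        ∑ i', D i' j * fderiv ℝ (g i' j) (Θ i', Φ j) (0, δj) := by
    rw [sum_comm]
    exact sum_apply_pi_single
      (fun j' v => ∑ i', D i' j' * fderiv ℝ (g i' j') (Θ i', Φ j') (0, v))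
      (by simp [Prod.mk_zero_zero]) j δj
  have hquad_i : ∑ i', ∑ j', D i' j' * (L * ‖(Pi.single i δi : U → E) i'‖ ^ 2) =
      L * (∑ j', D i j') * ‖δi‖ ^ 2 := by
    rw [sum_apply_pi_single (fun i' u => ∑ j', D i' j' * (L * ‖u‖ ^ 2)) (by simp) i δi,
      ← sum_mul]
    ring
  have hquad_j : ∑ i', ∑ j', D i' j' * (L * ‖(Pi.single j δj : V → E) j'‖ ^ 2) =
      L * (∑ i', D i' j) * ‖δj‖ ^ 2 := by
    rw [sum_comm, sum_apply_pi_single (fun j' v => ∑ i', D i' j' * (L * ‖v‖ ^ 2)) (by simp) j δj,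
      ← sum_mul]
    ring
  simp only [mul_add, sum_add_distrib, hlin_i, hlin_j, hquad_i, hquad_j]
  rfl

end PairwiseObjective

theorem stmt_13_general {U V : Type*} [Fintype U] [Fintype V] [DecidableEq U]
    [DecidableEq V] {d : ℕ}
    (D : U → V → ℝ) (hD : ∀ i j, 0 ≤ D i j)
    (y : U → V → ℝ) (L : ℝ) (hL : 0 < L)
    (ℓ : ℝ → EuclideanSpace ℝ (Fin d) × EuclideanSpace ℝ (Fin d) → ℝ)
    (hsmooth : ∀ c, ContDiff ℝ 2 (ℓ c))
    (hsym : ∀ c u v, ℓ c (u, v) = ℓ c (v, u))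
    (huu : ∀ c z (a b : EuclideanSpace ℝ (Fin d)),
      ‖iteratedFDeriv ℝ 2 (ℓ c) z ![(a, 0), (b, 0)]‖ ≤ L * ‖a‖ * ‖b‖)
    (huv : ∀ c z (a b : EuclideanSpace ℝ (Fin d)),
      ‖iteratedFDeriv ℝ 2 (ℓ c) z ![(a, 0), (0, b)]‖ ≤ L * ‖a‖ * ‖b‖)
    (f : (U → EuclideanSpace ℝ (Fin d)) → (V → EuclideanSpace ℝ (Fin d)) → ℝ)
    (hf : ∀ Θ Φ, f Θ Φ = ∑ i, ∑ j, D i j * ℓ (y i j) (Θ i, Φ j))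
    (Θ : U → EuclideanSpace ℝ (Fin d)) (Φ : V → EuclideanSpace ℝ (Fin d))
    (i : U) (j : V) (δi δj : EuclideanSpace ℝ (Fin d)) :
    f (Function.update Θ i (Θ i + δi)) (Function.update Φ j (Φ j + δj)) ≤
      f Θ Φ +
        fderiv ℝ (fun u => f (Function.update Θ i u) Φ) (Θ i) δi +
        fderiv ℝ (fun v => f Θ (Function.update Φ j v)) (Φ j) δj +
        L * (∑ j', D i j') * ‖δi‖ ^ 2 +
        L * (∑ i', D i' j) * ‖δj‖ ^ 2 := by
  obtain rfl : f = pairwiseObjective D fun i j => ℓ (y i j) := funext₂ hf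
  have hdiff : ∀ i j, Differentiable ℝ (ℓ (y i j)) := fun _ _ =>
    (hsmooth _).differentiable (by norm_num)
  rw [fderiv_pairwiseObjective_update_left_apply D hdiff,
    fderiv_pairwiseObjective_update_right_apply D hdiff,
    Function.update_self_add_eq_add_single, Function.update_self_add_eq_add_single]
  exact pairwiseObjective_add_single_le hD (fun _ _ => hsmooth _) (fun _ _ => hsym _) hL.le
    (fun _ _ => huu _) (fun _ _ => huv _) Θ Φ i j δi δj

/-- Block smoothness of the embedding-learning objective: with
`f(Θ,Φ) = ∑_{i,j} D(i,j) ℓ(y_{ij}) (θ_i, φ_j)`, `ℓ(y)` twice continuously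
differentiable, symmetric in its two arguments and with second derivative
blocks (`uu` and `uv`) bounded by `L` in operator norm, perturbing only
`θ_i` by `δ_i` and `φ_j` by `δ_j` gives
`f(Θ',Φ') ≤ f(Θ,Φ) + ∇_{θ_i}f·δ_i + ∇_{φ_j}f·δ_j + L p_i ‖δ_i‖² + L p_j ‖δ_j‖²`. -/
theorem stmt_13 {U V : Type*} [Fintype U] [Fintype V] [DecidableEq U]
    [DecidableEq V] {d : ℕ}
    (D : U → V → ℝ) (hD : ∀ i j, 0 ≤ D i j) (hDsum : ∑ i, ∑ j, D i j = 1)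
    (y : U → V → ℝ) (L : ℝ) (hL : 0 < L)
    (ℓ : ℝ → EuclideanSpace ℝ (Fin d) × EuclideanSpace ℝ (Fin d) → ℝ)
    (hsmooth : ∀ c, ContDiff ℝ 2 (ℓ c))
    (hsym : ∀ c u v, ℓ c (u, v) = ℓ c (v, u))
    (huu : ∀ c z (a b : EuclideanSpace ℝ (Fin d)),
      ‖iteratedFDeriv ℝ 2 (ℓ c) z ![(a, 0), (b, 0)]‖ ≤ L * ‖a‖ * ‖b‖)
    (huv : ∀ c z (a b : EuclideanSpace ℝ (Fin d)),
      ‖iteratedFDeriv ℝ 2 (ℓ c) z ![(a, 0), (0, b)]‖ ≤ L * ‖a‖ * ‖b‖)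
    (f : (U → EuclideanSpace ℝ (Fin d)) → (V → EuclideanSpace ℝ (Fin d)) → ℝ)
    (hf : ∀ Θ Φ, f Θ Φ = ∑ i, ∑ j, D i j * ℓ (y i j) (Θ i, Φ j))
    (Θ : U → EuclideanSpace ℝ (Fin d)) (Φ : V → EuclideanSpace ℝ (Fin d))
    (i : U) (j : V) (δi δj : EuclideanSpace ℝ (Fin d)) :
    f (Function.update Θ i (Θ i + δi)) (Function.update Φ j (Φ j + δj)) ≤
      f Θ Φ +
        fderiv ℝ (fun u => f (Function.update Θ i u) Φ) (Θ i) δi +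
        fderiv ℝ (fun v => f Θ (Function.update Φ j v)) (Φ j) δj +
        L * (∑ j', D i j') * ‖δi‖ ^ 2 +
        L * (∑ i', D i' j) * ‖δj‖ ^ 2 :=
  stmt_13_general D hD y L hL ℓ hsmooth hsym huu huv f hf Θ Φ i j δi δj
end
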